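/- arXiv:1602.05459 — 10 statements merged into one kernel-verified Lean document; each statement's English description precedes it below -/
import Mathlib

section
/- Let A be a real symmetric n×n matrix and let x be a nonzero vector in ℝⁿ. Set c = cos(A, xxᵀ) = (xᵀAx)/((xᵀx)·‖A‖_F) and assume c > 1/√2. Then the largest eigenvalue λ₁(A) of A is simple and dominant; more precisely, λ₁(A)² > Σ_{i=2}^{n} λᵢ(A)², so in particular λ₁(A) > |λᵢ(A)| for every i ≥ 2. -/
/-!
Write `λ₁ ≥ … ≥ λₙ` for the eigenvalues of `A` and `S = Σ λᵢ² = ‖A‖_F²`. The Rayleigh quotient of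
`A` is at most `λ₁`, so `1/√2 < c ≤ λ₁ / √S`, that is `S < 2 λ₁²`, which is
`Σ_{i ≥ 2} λᵢ² < λ₁²`. The identity `Σ_{i,j} A_{ij}² = tr (A²) = Σ λᵢ²` and the bound
`A ≤ λ₁ • 1` are read off the continuous functional calculus of the symmetric matrix `A`.
-/

open Matrix Polynomial BigOperators

/-- The Frobenius norm of a real matrix. -/
noncomputable def frob {m : Type*} [Fintype m] (A : Matrix m m ℝ) : ℝ :=
  Real.sqrt (∑ i, ∑ j, (A i j) ^ 2)

theorem Polynomial.map_univ_val_eq_of_prod_X_sub_C_eq {ι R : Type*} [Fintype ι] [CommRing R]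
    [IsDomain R] {μ ν : ι → R} (h : ∏ i, (X - C (μ i)) = ∏ i, (X - C (ν i))) :
    Finset.univ.val.map μ = Finset.univ.val.map ν := by
  have := congrArg roots h
  rw [roots_prod _ _ (Finset.prod_ne_zero_iff.mpr fun i _ => X_sub_C_ne_zero _),
    roots_prod _ _ (Finset.prod_ne_zero_iff.mpr fun i _ => X_sub_C_ne_zero _)] at this
  simpa using this

namespace Matrix

variable {n : Type*} [Fintype n] [DecidableEq n]

theorem exists_eq_of_mem_spectrum_of_charpoly_eq_prod {K : Type*} [Field K] {M : Matrix n n K}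
    {μ : n → K} (h : M.charpoly = ∏ i, (X - C (μ i))) {r : K} (hr : r ∈ spectrum K M) :
    ∃ i, μ i = r := by
  rw [mem_spectrum_iff_isRoot_charpoly, h, IsRoot, eval_prod, Finset.prod_eq_zero_iff] at hr
  obtain ⟨i, -, hi⟩ := hr
  exact ⟨i, (sub_eq_zero.mp (by simpa using hi)).symm⟩

open scoped MatrixOrder in
theorem IsSymm.dotProduct_mulVec_le {A : Matrix n n ℝ} (hA : A.IsSymm) {t : ℝ}
    (ht : ∀ r ∈ spectrum ℝ A, r ≤ t) (x : n → ℝ) : x ⬝ᵥ A *ᵥ x ≤ t * (x ⬝ᵥ x) := by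
  have hle : A ≤ algebraMap ℝ _ t :=
    le_algebraMap_of_spectrum_le ht (isHermitian_iff_isSymm.mpr hA).isSelfAdjoint
  have := (le_iff.mp hle).dotProduct_mulVec_nonneg x
  simpa [Algebra.algebraMap_eq_smul_one, sub_mulVec, smul_mulVec, dotProduct_sub] using this

theorem trace_eq_sum_of_charpoly_eq_prod {R : Type*} [CommRing R] {M : Matrix n n R}
    {μ : n → R} (h : M.charpoly = ∏ i, (X - C (μ i))) : M.trace = ∑ i, μ i := by
  rw [trace_eq_neg_charpoly_nextCoeff, h, prod_X_sub_C_nextCoeff, neg_neg]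

theorem IsSymm.trace_cfc_eq_sum {A : Matrix n n ℝ} (hA : A.IsSymm) {μ : n → ℝ}
    (h : A.charpoly = ∏ i, (X - C (μ i))) (f : ℝ → ℝ) : (cfc f A).trace = ∑ i, f (μ i) := by
  have hA' : A.IsHermitian := isHermitian_iff_isSymm.mpr hA
  have hroots : Finset.univ.val.map hA'.eigenvalues = Finset.univ.val.map μ :=
    map_univ_val_eq_of_prod_X_sub_C_eq (by simpa using hA'.charpoly_eq.symm.trans h)
  rw [trace_eq_sum_of_charpoly_eq_prod (by simpa using hA'.charpoly_cfc_eq f)]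
  have := congrArg (fun s => (s.map f).sum) hroots
  simpa only [Multiset.map_map, Function.comp_def, ← Finset.sum_eq_multiset_sum] using this

theorem IsSymm.sum_sq_entries_eq_sum_sq {A : Matrix n n ℝ} (hA : A.IsSymm) {μ : n → ℝ}
    (h : A.charpoly = ∏ i, (X - C (μ i))) : ∑ i, ∑ j, A i j ^ 2 = ∑ i, μ i ^ 2 := by
  rw [← hA.trace_cfc_eq_sum h (· ^ 2),
    cfc_pow_id A 2 (isHermitian_iff_isSymm.mpr hA).isSelfAdjoint, sq, trace]
  simp [mul_apply, sq, hA.apply]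

end Matrix

theorem pos_and_lt_two_mul_sq_of_inv_sqrt_two_lt_div {q a m S : ℝ} (ha : 0 ≤ a) (hq : q ≤ m * a)
    (hc : 1 / √2 < q / (a * √S)) : 0 < m ∧ S < 2 * m ^ 2 := by
  have haS : 0 < a * √S := by
    refine lt_of_le_of_ne (by positivity) fun h => ?_
    rw [← h, div_zero] at hc
    exact (by positivity : (0 : ℝ) ≤ 1 / √2).not_gt hc
  have hS : 0 < √S := pos_of_mul_pos_right haS ha
  have hcm : 1 / √2 < m / √S := by
    refine hc.trans_le ?_
    rw [div_le_div_iff₀ haS hS]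
    nlinarith
  have hlt : √S < m * √2 := by
    rwa [div_lt_div_iff₀ (by positivity) hS, one_mul] at hcm
  have hm : 0 < m := pos_of_mul_pos_left (hS.trans hlt) (by positivity)
  refine ⟨hm, ?_⟩
  calc S = √S ^ 2 := (Real.sq_sqrt (Real.sqrt_pos.mp hS).le).symm
    _ < (m * √2) ^ 2 := pow_lt_pow_left₀ hlt hS.le two_ne_zero
    _ = 2 * m ^ 2 := by rw [mul_pow, Real.sq_sqrt zero_le_two, mul_comm]

theorem largest_eigenvalue_simple_dominant_general
    (n : ℕ) (hn : 0 < n) (A : Matrix (Fin n) (Fin n) ℝ) (hA : A.IsSymm)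
    (x : Fin n → ℝ)
    (μ : Fin n → ℝ) (hmono : Antitone μ)
    (hchar : A.charpoly = ∏ i, (X - C (μ i)))
    (c : ℝ) (hc : c = (x ⬝ᵥ A.mulVec x) / ((x ⬝ᵥ x) * frob A))
    (hcbig : 1 / Real.sqrt 2 < c) :
    (∑ i ∈ Finset.univ.erase (⟨0, hn⟩ : Fin n), (μ i) ^ 2) < (μ ⟨0, hn⟩) ^ 2 ∧
      ∀ i : Fin n, i ≠ ⟨0, hn⟩ → |μ i| < μ ⟨0, hn⟩ := by
  set i₀ : Fin n := ⟨0, hn⟩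
  have hmax : ∀ i, μ i ≤ μ i₀ := fun i => hmono (Nat.zero_le _)
  have hrayleigh : x ⬝ᵥ A *ᵥ x ≤ μ i₀ * (x ⬝ᵥ x) := hA.dotProduct_mulVec_le (fun r hr => by
    obtain ⟨i, rfl⟩ := exists_eq_of_mem_spectrum_of_charpoly_eq_prod hchar hr
    exact hmax i) x
  have hfrob : frob A = √(∑ i, μ i ^ 2) := by rw [frob, hA.sum_sq_entries_eq_sum_sq hchar]
  have hxx : 0 ≤ x ⬝ᵥ x := by simpa using dotProduct_self_star_nonneg x
  obtain ⟨hpos, hsq⟩ :=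
    pos_and_lt_two_mul_sq_of_inv_sqrt_two_lt_div hxx hrayleigh (hfrob ▸ hc ▸ hcbig)
  have hrest : ∑ i ∈ Finset.univ.erase i₀, μ i ^ 2 < μ i₀ ^ 2 := by
    rw [← Finset.add_sum_erase _ _ (Finset.mem_univ i₀)] at hsq
    linarith
  refine ⟨hrest, fun i hi => abs_lt_of_sq_lt_sq ?_ hpos.le⟩
  exact (Finset.single_le_sum (fun j _ => sq_nonneg (μ j))
    (Finset.mem_erase.mpr ⟨hi, Finset.mem_univ i⟩)).trans_lt hrest

/-- if `c = cos(A, xxᵀ) > 1/√2`, then `λ₁(A)` is simple and dominant: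
`λ₁(A)² > Σ_{i≥2} λᵢ(A)²`, so in particular `λ₁(A) > |λᵢ(A)|` for `i ≥ 2`. -/
theorem largest_eigenvalue_simple_dominant
    (n : ℕ) (hn : 0 < n) (A : Matrix (Fin n) (Fin n) ℝ) (hA : A.IsSymm)
    (x : Fin n → ℝ) (hx : x ≠ 0)
    (μ : Fin n → ℝ) (hmono : Antitone μ)
    (hchar : A.charpoly = ∏ i, (X - C (μ i)))
    (c : ℝ) (hc : c = (x ⬝ᵥ A.mulVec x) / ((x ⬝ᵥ x) * frob A))
    (hcbig : 1 / Real.sqrt 2 < c) :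
    (∑ i ∈ Finset.univ.erase (⟨0, hn⟩ : Fin n), (μ i) ^ 2) < (μ ⟨0, hn⟩) ^ 2 ∧
      ∀ i : Fin n, i ≠ ⟨0, hn⟩ → |μ i| < μ ⟨0, hn⟩ :=
  largest_eigenvalue_simple_dominant_general n hn A hA x μ hmono hchar c hc hcbig
end

section
/- Let A be a real symmetric n×n matrix and let x be a nonzero vector in ℝⁿ. Set c = cos(A, xxᵀ) = (xᵀAx)/((xᵀx)·‖A‖_F), assume c > 0, and let μ = c·‖A‖_F and s = √(1 − c²). Then |λ₁(A) − μ| ≤ s·|λ₁(A)|, where λ₁(A) is the largest eigenvalue of A. -/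
/-!
The roots of the characteristic polynomial form the spectrum, so `λ₁ = μ 0` is the largest
eigenvalue; hence `λ₁ I - A` is positive semidefinite and the Rayleigh quotient
`m = xᵀAx / xᵀx = c ‖A‖_F` is at most `λ₁`, which is therefore positive. Submultiplicativity of the
Frobenius norm, applied to `A v = λ₁ v`, gives `λ₁ ≤ ‖A‖_F`, so `c λ₁ ≤ m`. Hence
`0 ≤ λ₁ - m ≤ (1 - c) λ₁ ≤ √(1 - c²) λ₁`.
-/

open Matrix Polynomial BigOperators

namespace Matrix

variable {n : Type*} [Fintype n]

theorem mem_spectrum_iff_exists_eq_of_charpoly_eq_prod [DecidableEq n] {K : Type*} [Field K]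
    {A : Matrix n n K} {μ : n → K} (h : A.charpoly = ∏ i, (X - C (μ i))) {t : K} :
    t ∈ spectrum K A ↔ ∃ i, μ i = t := by
  simp only [mem_spectrum_iff_isRoot_charpoly, h, IsRoot.def, eval_prod, eval_sub, eval_X, eval_C,
    Finset.prod_eq_zero_iff, Finset.mem_univ, true_and, sub_eq_zero]
  exact exists_congr fun _ ↦ eq_comm

theorem IsHermitian.dotProduct_mulVec_le_of_spectrum_le [DecidableEq n] {A : Matrix n n ℝ}
    (hA : A.IsHermitian) {L : ℝ} (hL : ∀ t ∈ spectrum ℝ A, t ≤ L) (x : n → ℝ) :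
    x ⬝ᵥ A *ᵥ x ≤ L * (x ⬝ᵥ x) := by
  have hM : (algebraMap ℝ _ L - A).PosSemidef := by
    refine posSemidef_iff_isHermitian_and_spectrum_nonneg.mpr
      ⟨(IsSelfAdjoint.algebraMap _ (.all L)).sub hA, ?_⟩
    rw [← spectrum.singleton_sub_eq]
    rintro _ ⟨_, rfl, t, ht, rfl⟩
    simpa using hL t ht
  simpa only [Algebra.algebraMap_eq_smul_one, sub_mulVec, smul_mulVec, one_mulVec, star_trivial,
    dotProduct_sub, dotProduct_smul, smul_eq_mul, sub_nonneg] using hM.dotProduct_mulVec_nonneg x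

section Frobenius

attribute [local instance] frobeniusNormedAddCommGroup frobeniusNormSMulClass

theorem norm_le_frobenius_norm_of_mem_spectrum [DecidableEq n] {𝕜 : Type*} [RCLike 𝕜]
    {A : Matrix n n 𝕜} {t : 𝕜} (ht : t ∈ spectrum 𝕜 A) : ‖t‖ ≤ ‖A‖ := by
  rw [← spectrum_toLin', ← Module.End.hasEigenvalue_iff_mem_spectrum] at ht
  obtain ⟨v, hv⟩ := ht.exists_hasEigenvector
  have hAv : A * replicateCol Unit v = t • replicateCol Unit v := by
    rw [← replicateCol_mulVec, ← replicateCol_smul, ← toLin'_apply, hv.apply_eq_smul]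
  have hv_pos : 0 < ‖replicateCol Unit v‖ := by simpa using hv.2
  have := frobenius_norm_mul A (replicateCol Unit v)
  rw [hAv, norm_smul] at this
  exact le_of_mul_le_mul_right this hv_pos

theorem frob_eq_frobenius_norm (A : Matrix n n ℝ) : frob A = ‖A‖ := by
  rw [frob, frobenius_norm_def, Real.sqrt_eq_rpow]
  simp [Real.norm_eq_abs]

end Frobenius

end Matrix

theorem abs_sub_le_sqrt_one_sub_sq_mul_abs {c L m : ℝ} (hc : 0 ≤ c) (hm : 0 < m)
    (hcL : c * L ≤ m) (hmL : m ≤ L) : |L - m| ≤ √(1 - c ^ 2) * |L| := by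
  have hL : 0 < L := hm.trans_le hmL
  have hc1 : c ≤ 1 := le_of_mul_le_mul_right (by linarith) hL
  have h_sqrt : 1 - c ≤ √(1 - c ^ 2) := Real.le_sqrt_of_sq_le (by nlinarith)
  rw [abs_of_nonneg (sub_nonneg.mpr hmL), abs_of_pos hL]
  nlinarith

theorem largest_eigenvalue_relative_error_general
    (n : ℕ) (hn : 0 < n) (A : Matrix (Fin n) (Fin n) ℝ) (hA : A.IsSymm)
    (x : Fin n → ℝ)
    (μ : Fin n → ℝ) (hmono : Antitone μ)
    (hchar : A.charpoly = ∏ i, (X - C (μ i)))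
    (c : ℝ) (hc : c = (x ⬝ᵥ A.mulVec x) / ((x ⬝ᵥ x) * frob A))
    (hcpos : 0 < c)
    (m s : ℝ) (hm : m = c * frob A) (hs : s = Real.sqrt (1 - c ^ 2)) :
    |μ ⟨0, hn⟩ - m| ≤ s * |μ ⟨0, hn⟩| := by
  set L := μ ⟨0, hn⟩
  have hL_mem : L ∈ spectrum ℝ A :=
    (mem_spectrum_iff_exists_eq_of_charpoly_eq_prod hchar).mpr ⟨_, rfl⟩
  have hL_max : ∀ t ∈ spectrum ℝ A, t ≤ L := by
    intro t ht
    obtain ⟨i, rfl⟩ := (mem_spectrum_iff_exists_eq_of_charpoly_eq_prod hchar).mp ht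
    exact hmono (Nat.zero_le i.val)
  have hLF : L ≤ frob A := by
    simpa [frob_eq_frobenius_norm] using
      (le_abs_self L).trans (norm_le_frobenius_norm_of_mem_spectrum hL_mem)
  have hD : (x ⬝ᵥ x) * frob A ≠ 0 := by
    rintro hD
    simp [hc, hD] at hcpos
  have hxx : 0 < x ⬝ᵥ x := by
    simpa using (dotProduct_self_star_nonneg x).lt_of_ne' (left_ne_zero_of_mul hD)
  have hF : 0 < frob A := (Real.sqrt_nonneg _).lt_of_ne' (right_ne_zero_of_mul hD)
  have hmx : m * (x ⬝ᵥ x) = x ⬝ᵥ A *ᵥ x := by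
    rw [hm, hc]
    field_simp
  have hmL : m ≤ L := le_of_mul_le_mul_right
    (hmx ▸ (isHermitian_iff_isSymm.mpr hA).dotProduct_mulVec_le_of_spectrum_le hL_max x) hxx
  rw [hs]
  exact abs_sub_le_sqrt_one_sub_sq_mul_abs hcpos.le (hm ▸ mul_pos hcpos hF)
    (hm ▸ mul_le_mul_of_nonneg_left hLF hcpos.le) hmL

/-- if `c = cos(A, xxᵀ) > 0`, `μ = c‖A‖_F` and `s = √(1 - c²)`, then
`|λ₁(A) - μ| ≤ s |λ₁(A)|`. -/
theorem largest_eigenvalue_relative_error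
    (n : ℕ) (hn : 0 < n) (A : Matrix (Fin n) (Fin n) ℝ) (hA : A.IsSymm)
    (x : Fin n → ℝ) (hx : x ≠ 0)
    (μ : Fin n → ℝ) (hmono : Antitone μ)
    (hchar : A.charpoly = ∏ i, (X - C (μ i)))
    (c : ℝ) (hc : c = (x ⬝ᵥ A.mulVec x) / ((x ⬝ᵥ x) * frob A))
    (hcpos : 0 < c)
    (m s : ℝ) (hm : m = c * frob A) (hs : s = Real.sqrt (1 - c ^ 2)) :
    |μ ⟨0, hn⟩ - m| ≤ s * |μ ⟨0, hn⟩| :=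
  largest_eigenvalue_relative_error_general n hn A hA x μ hmono hchar c hc hcpos m s hm hs
end

section
/- Let A be a real symmetric n×n matrix, x a nonzero vector in ℝⁿ, c = cos(A, xxᵀ) = (xᵀAx)/((xᵀx)·‖A‖_F) with c > 0, μ = c·‖A‖_F, and s = √(1 − c²). Then (λ₁(A) − μ)² + Σ_{i=2}^{n} λᵢ(A)² ≤ s²·Σ_{i=1}^{n} λᵢ(A)², where λ₁(A) ≥ … ≥ λₙ(A) are the eigenvalues of A. -/
open Matrix Polynomial BigOperators

lemma charpoly_conj_aux {n : Type*} [Fintype n] [DecidableEq n]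
    (U B : Matrix n n ℝ) (h1 : U * star U = 1) :
    (U * B * star U).charpoly = B.charpoly := by
  classical
  let f : Matrix n n ℝ →+* Matrix n n ℝ[X] := (C : ℝ →+* ℝ[X]).mapMatrix
  have hcen : ∀ M : Matrix n n ℝ[X], Matrix.scalar n (X : ℝ[X]) * M
      = M * Matrix.scalar n (X : ℝ[X]) := fun M =>
    (Matrix.scalar_commute (X : ℝ[X]) (fun r' => Commute.all _ _) M).eq
  have key : charmatrix (U * B * star U) = f U * charmatrix B * f (star U) := by
    rw [charmatrix, charmatrix, mul_sub, sub_mul]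
    congr 1
    · rw [← hcen (f U), mul_assoc, ← map_mul f, h1, _root_.map_one, mul_one]
    · rw [map_mul f, map_mul f]
  have hdet : (f U).det * (f (star U)).det = 1 := by
    rw [← Matrix.det_mul, ← map_mul f, h1, _root_.map_one, Matrix.det_one]
  rw [Matrix.charpoly, Matrix.charpoly, key, Matrix.det_mul, Matrix.det_mul]
  rw [mul_right_comm, hdet, one_mul]

/-- key Hoffman–Wielandt step: with `c = cos(A, xxᵀ) > 0`, `μ = c‖A‖_F`,
`s = √(1 - c²)`, we have `(λ₁(A) - μ)² + Σ_{i≥2} λᵢ(A)² ≤ s² Σ_{i} λᵢ(A)²`. -/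
theorem hoffman_wielandt_projection_step
    (n : ℕ) (hn : 0 < n) (A : Matrix (Fin n) (Fin n) ℝ) (hA : A.IsSymm)
    (x : Fin n → ℝ) (hx : x ≠ 0)
    (μ : Fin n → ℝ) (hmono : Antitone μ)
    (hchar : A.charpoly = ∏ i, (X - C (μ i)))
    (c : ℝ) (hc : c = (x ⬝ᵥ A.mulVec x) / ((x ⬝ᵥ x) * frob A))
    (hcpos : 0 < c)
    (m s : ℝ) (hm : m = c * frob A) (hs : s = Real.sqrt (1 - c ^ 2)) :
    (μ ⟨0, hn⟩ - m) ^ 2 + ∑ i ∈ Finset.univ.erase (⟨0, hn⟩ : Fin n), (μ i) ^ 2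
      ≤ s ^ 2 * ∑ i, (μ i) ^ 2 := by
  classical
  have hH : A.IsHermitian := by
    rw [Matrix.IsHermitian, Matrix.conjTranspose_eq_transpose_of_trivial]; exact hA
  set U : Matrix (Fin n) (Fin n) ℝ := (Matrix.IsHermitian.eigenvectorUnitary hH : Matrix (Fin n) (Fin n) ℝ) with hUdef
  set lam : Fin n → ℝ := hH.eigenvalues with hlamdef
  have hU1 : U * star U = 1 := (Matrix.mem_unitaryGroup_iff).mp (Matrix.IsHermitian.eigenvectorUnitary hH).2
  have hU1' : star U * U = 1 := (Matrix.mem_unitaryGroup_iff').mp (Matrix.IsHermitian.eigenvectorUnitary hH).2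
  have hsUT : star U = Uᵀ := Matrix.conjTranspose_eq_transpose_of_trivial U
  have hspec : A = U * Matrix.diagonal lam * star U := by
    have h := hH.spectral_theorem
    rwa [RCLike.ofReal_real_eq_id, Function.id_comp] at h
  -- charpoly of the diagonal matrix
  have hdiagchar : (Matrix.diagonal lam).charpoly = ∏ i, (X - C (lam i)) := by
    rw [Matrix.charpoly_of_upperTriangular _ (Matrix.blockTriangular_diagonal lam)]
    simp
  have hprod : ∏ i, (X - C (μ i)) = ∏ i, (X - C (lam i)) := by
    rw [← hchar, ← hdiagchar, hspec, charpoly_conj_aux _ _ hU1]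
  -- multiset of eigenvalues
  have hms : Multiset.map μ Finset.univ.val = Multiset.map lam Finset.univ.val := by
    have h1 : ((Multiset.map μ Finset.univ.val).map (fun a => X - C a)).prod
        = ((Multiset.map lam Finset.univ.val).map (fun a => X - C a)).prod := by
      rw [Multiset.map_map, Multiset.map_map]
      simpa [Finset.prod_eq_multiset_prod] using hprod
    have h2 := congrArg Polynomial.roots h1
    rwa [Polynomial.roots_multiset_prod_X_sub_C, Polynomial.roots_multiset_prod_X_sub_C] at h2
  have hsumsq : ∑ i, (μ i) ^ 2 = ∑ i, (lam i) ^ 2 := by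
    calc ∑ i, (μ i) ^ 2 = ((Multiset.map μ Finset.univ.val).map (fun a => a ^ 2)).sum := by
          rw [Multiset.map_map]; rfl
      _ = ((Multiset.map lam Finset.univ.val).map (fun a => a ^ 2)).sum := by rw [hms]
      _ = ∑ i, (lam i) ^ 2 := by rw [Multiset.map_map]; rfl
  have hlam_le : ∀ i, lam i ≤ μ ⟨0, hn⟩ := by
    intro i
    have hmem : lam i ∈ Multiset.map μ Finset.univ.val := by
      rw [hms]
      exact Multiset.mem_map_of_mem _ (Finset.mem_val.mpr (Finset.mem_univ i))
    obtain ⟨j, -, hj⟩ := Multiset.mem_map.mp hmem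
    rw [← hj]
    exact hmono (by simp [Fin.le_def])
  -- Frobenius norm squared equals sum of eigenvalue squares
  have hfrob_nonneg : (0:ℝ) ≤ ∑ i, ∑ j, (A i j) ^ 2 :=
    Finset.sum_nonneg fun i _ => Finset.sum_nonneg fun j _ => sq_nonneg _
  have h3 : A * A = U * (Matrix.diagonal lam * Matrix.diagonal lam) * star U := by
    conv_lhs => rw [hspec]
    have e1 : star U * (U * Matrix.diagonal lam * star U) = Matrix.diagonal lam * star U := by
      rw [← mul_assoc, ← mul_assoc, hU1', one_mul]
    calc (U * Matrix.diagonal lam * star U) * (U * Matrix.diagonal lam * star U)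
        = U * Matrix.diagonal lam * (star U * (U * Matrix.diagonal lam * star U)) := by
          rw [mul_assoc (U * Matrix.diagonal lam)]
      _ = U * Matrix.diagonal lam * (Matrix.diagonal lam * star U) := by rw [e1]
      _ = U * (Matrix.diagonal lam * Matrix.diagonal lam) * star U := by
          rw [mul_assoc U, mul_assoc U, mul_assoc (Matrix.diagonal lam)]
  have hF2 : frob A ^ 2 = ∑ i, (lam i) ^ 2 := by
    have h1 : frob A ^ 2 = ∑ i, ∑ j, (A i j) ^ 2 := Real.sq_sqrt hfrob_nonneg
    have h2 : ∑ i, ∑ j, (A i j) ^ 2 = Matrix.trace (A * A) := by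
      rw [Matrix.trace]
      apply Finset.sum_congr rfl
      intro i _
      rw [Matrix.diag_apply, Matrix.mul_apply]
      apply Finset.sum_congr rfl
      intro j _
      have : A j i = A i j := by
        conv_lhs => rw [← hA]
        rfl
      rw [this, sq]
    have h4 : Matrix.trace (A * A) = ∑ i, (lam i) ^ 2 := by
      rw [h3, Matrix.trace_mul_cycle, ← mul_assoc, hU1', one_mul,
        Matrix.diagonal_mul_diagonal, Matrix.trace_diagonal]
      simp [sq]
    rw [h1, h2, h4]
  -- Rayleigh quotient control
  set y : Fin n → ℝ := Matrix.mulVec (star U) x with hy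
  have hxAx : x ⬝ᵥ A.mulVec x = ∑ i, lam i * (y i) ^ 2 := by
    have h5 : A.mulVec x = U.mulVec ((Matrix.diagonal lam).mulVec y) := by
      rw [hspec, hy, Matrix.mulVec_mulVec, Matrix.mulVec_mulVec, mul_assoc]
    rw [h5, Matrix.dotProduct_mulVec, ← Matrix.mulVec_transpose, ← hsUT, ← hy]
    simp [dotProduct, Matrix.mulVec_diagonal]
    apply Finset.sum_congr rfl
    intro i _; ring
  have hUy : U.mulVec y = x := by
    rw [hy, Matrix.mulVec_mulVec, hU1, Matrix.one_mulVec]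
  have hyy : y ⬝ᵥ y = x ⬝ᵥ x := by
    calc y ⬝ᵥ y = y ⬝ᵥ (star U).mulVec x := by rw [← hy]
      _ = (y ᵥ* star U) ⬝ᵥ x := Matrix.dotProduct_mulVec _ _ _
      _ = (U *ᵥ y) ⬝ᵥ x := by rw [hsUT, Matrix.vecMul_transpose]
      _ = x ⬝ᵥ x := by rw [hUy]
  have hxx_nonneg : 0 ≤ x ⬝ᵥ x := Finset.sum_nonneg fun i _ => mul_self_nonneg _
  have hxx_pos : 0 < x ⬝ᵥ x :=
    lt_of_le_of_ne hxx_nonneg (Ne.symm fun h => hx (dotProduct_self_eq_zero.mp h))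
  have hray : x ⬝ᵥ A.mulVec x ≤ μ ⟨0, hn⟩ * (x ⬝ᵥ x) := by
    rw [hxAx, ← hyy]
    have hyysum : y ⬝ᵥ y = ∑ i, (y i) ^ 2 := by
      simp [dotProduct, sq]
    rw [hyysum, Finset.mul_sum]
    exact Finset.sum_le_sum fun i _ => mul_le_mul_of_nonneg_right (hlam_le i) (sq_nonneg _)
  -- positivity of frob A and m
  have hFnonneg : 0 ≤ frob A := Real.sqrt_nonneg _
  have hFne : frob A ≠ 0 := by
    intro h; rw [hc, h, mul_zero, div_zero] at hcpos; exact lt_irrefl 0 hcpos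
  have hFpos : 0 < frob A := lt_of_le_of_ne hFnonneg (Ne.symm hFne)
  have hmval : m = (x ⬝ᵥ A.mulVec x) / (x ⬝ᵥ x) := by
    rw [hm, hc]
    field_simp
  have hm0 : 0 < m := by rw [hm]; exact mul_pos hcpos hFpos
  have hmle : m ≤ μ ⟨0, hn⟩ := by
    rw [hmval, div_le_iff₀ hxx_pos]
    linarith [hray]
  have hmu0sq : μ ⟨0, hn⟩ ^ 2 ≤ ∑ i, (μ i) ^ 2 :=
    Finset.single_le_sum (f := fun i => (μ i) ^ 2) (fun i _ => sq_nonneg _) (Finset.mem_univ _)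
  have hT : ∑ i, (μ i) ^ 2 = frob A ^ 2 := by rw [hsumsq, hF2]
  have hc2 : c ^ 2 * frob A ^ 2 = m ^ 2 := by rw [hm]; ring
  have hmu0pos : 0 < μ ⟨0, hn⟩ := lt_of_lt_of_le hm0 hmle
  have hcle : c ^ 2 ≤ 1 := by
    have hmsq : m ^ 2 ≤ μ ⟨0, hn⟩ ^ 2 := by nlinarith
    have hF2pos : 0 < frob A ^ 2 := by positivity
    nlinarith [hT, hc2, hmu0sq]
  have hs2 : s ^ 2 = 1 - c ^ 2 := by
    rw [hs]; exact Real.sq_sqrt (by linarith)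
  have herase : ∑ i ∈ Finset.univ.erase (⟨0, hn⟩ : Fin n), (μ i) ^ 2
      = (∑ i, (μ i) ^ 2) - μ ⟨0, hn⟩ ^ 2 := by
    rw [eq_sub_iff_add_eq, Finset.sum_erase_add _ _ (Finset.mem_univ _)]
  rw [herase, hs2]
  have hkey : c ^ 2 * (∑ i, (μ i) ^ 2) = m ^ 2 := by rw [hT]; exact hc2
  nlinarith [mul_nonneg hm0.le (sub_nonneg.mpr hmle), hkey]
end

section
/- Let A be a real symmetric n×n matrix with spectral decomposition A = Σ_{i=1}^{n} λᵢ vᵢvᵢᵀ, where λ₁ ≥ … ≥ λₙ and v₁,…,vₙ is an orthonormal basis of eigenvectors. Let x be a nonzero vector in ℝⁿ, and set cᵢ = vᵢᵀx/‖x‖₂ and μᵢ = λᵢ/‖A‖_F. Then cos(A, xxᵀ) = Σ_{i=1}^{n} μᵢ cᵢ², and cos(A, xxᵀ) ≤ μ₁c₁² + √(1 − μ₁²)·(1 − c₁²). -/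
open Matrix Polynomial BigOperators

/-- The Euclidean norm of a real vector. -/
noncomputable def nrm {m : Type*} [Fintype m] (v : m → ℝ) : ℝ :=
  Real.sqrt (∑ i, (v i) ^ 2)

/-! Let `V` be the matrix with rows `vᵢ`. Orthonormality says `V Vᵀ = 1`, and the decomposition
reads `A = Vᵀ diag(λ) V`. Hence `xᵀAx = Σᵢ λᵢ (vᵢᵀx)²`, which divided by `‖x‖² ‖A‖_F` is the
expansion, and `‖A‖_F² = tr(A Aᵀ) = tr(diag(λ)²) = Σᵢ λᵢ²`, `Σᵢ (vᵢᵀx)² = ‖Vx‖² = ‖x‖²`, so that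
`Σᵢ μᵢ² ≤ 1` and `Σᵢ cᵢ² ≤ 1`. Splitting off the first term, Cauchy–Schwarz bounds the rest by
`√(Σ_{i>1} μᵢ²) √(Σ_{i>1} cᵢ⁴) ≤ √(1 - μ₁²) Σ_{i>1} cᵢ² ≤ √(1 - μ₁²)(1 - c₁²)`. -/

section

variable {ι : Type*} [Fintype ι]

theorem nrm_sq (x : ι → ℝ) : nrm x ^ 2 = x ⬝ᵥ x := by
  rw [nrm, Real.sq_sqrt (by positivity)]
  simp only [dotProduct, sq]

theorem frob_sq_eq_trace_mul_transpose (A : Matrix ι ι ℝ) : frob A ^ 2 = (A * Aᵀ).trace := by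
  rw [frob, Real.sq_sqrt (by positivity)]
  simp only [trace, diag, mul_apply, transpose_apply, sq]

theorem sum_smul_vecMulVec_self_eq [DecidableEq ι] (lam : ι → ℝ) (v : ι → ι → ℝ) :
    ∑ i, lam i • vecMulVec (v i) (v i) = (of v)ᵀ * diagonal lam * of v := by
  ext a b
  simp [Matrix.sum_apply, vecMulVec_apply, mul_apply, diagonal, mul_comm, mul_left_comm]

theorem frob_sq_transpose_mul_diagonal_mul [DecidableEq ι] {V : Matrix ι ι ℝ} (hV : V * Vᵀ = 1)
    (lam : ι → ℝ) : frob (Vᵀ * diagonal lam * V) ^ 2 = ∑ i, lam i ^ 2 := by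
  rw [frob_sq_eq_trace_mul_transpose, transpose_mul, transpose_mul, transpose_transpose,
    diagonal_transpose]
  calc (Vᵀ * diagonal lam * V * (Vᵀ * (diagonal lam * V))).trace
      = (Vᵀ * (diagonal lam * diagonal lam) * V).trace := by
        simp only [Matrix.mul_assoc, ← Matrix.mul_assoc V, hV, Matrix.one_mul]
    _ = (diagonal lam * diagonal lam * (V * Vᵀ)).trace := by
        rw [Matrix.mul_assoc, trace_mul_comm, Matrix.mul_assoc]
    _ = ∑ i, lam i ^ 2 := by
        simp only [hV, Matrix.mul_one, diagonal_mul_diagonal, trace_diagonal, sq]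

theorem dotProduct_transpose_mul_diagonal_mul_mulVec [DecidableEq ι] (V : Matrix ι ι ℝ)
    (lam : ι → ℝ) (x : ι → ℝ) :
    x ⬝ᵥ (Vᵀ * diagonal lam * V) *ᵥ x = ∑ i, lam i * (V *ᵥ x) i ^ 2 := by
  rw [← mulVec_mulVec, ← mulVec_mulVec, dotProduct_mulVec, vecMul_transpose]
  simp only [dotProduct, mulVec_diagonal, sq]
  exact Finset.sum_congr rfl fun i _ => by ring

theorem dotProduct_mulVec_self_of_mul_transpose_eq_one [DecidableEq ι] {V : Matrix ι ι ℝ}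
    (hV : V * Vᵀ = 1) (x : ι → ℝ) : V *ᵥ x ⬝ᵥ V *ᵥ x = x ⬝ᵥ x := by
  have hVtV : Vᵀ * V = 1 := mul_eq_one_comm.mp hV
  rw [dotProduct_mulVec, ← vecMul_transpose, vecMul_vecMul, hVtV, vecMul_one]

theorem sum_div_sq_le_one {f : ι → ℝ} {r : ℝ} (hf : ∑ i, f i ^ 2 = r ^ 2) :
    ∑ i, (f i / r) ^ 2 ≤ 1 := by
  simp only [div_pow, ← Finset.sum_div, hf, div_self_le_one]

end

theorem sum_mul_sq_le_of_sum_sq_le_one {ι : Type*} [DecidableEq ι] {s : Finset ι} {i : ι}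
    (hi : i ∈ s) {μ c : ι → ℝ} (hμ : ∑ k ∈ s, μ k ^ 2 ≤ 1) (hc : ∑ k ∈ s, c k ^ 2 ≤ 1) :
    ∑ k ∈ s, μ k * c k ^ 2 ≤ μ i * c i ^ 2 + √(1 - μ i ^ 2) * (1 - c i ^ 2) := by
  rw [← Finset.add_sum_erase s _ hi]
  gcongr
  have hμ' : ∑ k ∈ s.erase i, μ k ^ 2 ≤ 1 - μ i ^ 2 := by
    linarith [Finset.add_sum_erase s (fun k => μ k ^ 2) hi]
  have hc' : ∑ k ∈ s.erase i, c k ^ 2 ≤ 1 - c i ^ 2 := by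
    linarith [Finset.add_sum_erase s (fun k => c k ^ 2) hi]
  have hc_nonneg : ∀ k ∈ s.erase i, 0 ≤ c k ^ 2 := fun k _ => sq_nonneg _
  calc ∑ k ∈ s.erase i, μ k * c k ^ 2
      ≤ √(∑ k ∈ s.erase i, μ k ^ 2) * √(∑ k ∈ s.erase i, (c k ^ 2) ^ 2) :=
        Real.sum_mul_le_sqrt_mul_sqrt _ _ _
    _ ≤ √(1 - μ i ^ 2) * √((∑ k ∈ s.erase i, c k ^ 2) ^ 2) := by
        gcongr
        exact Finset.sum_sq_le_sq_sum_of_nonneg hc_nonneg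
    _ = √(1 - μ i ^ 2) * ∑ k ∈ s.erase i, c k ^ 2 := by
        rw [Real.sqrt_sq (Finset.sum_nonneg hc_nonneg)]
    _ ≤ √(1 - μ i ^ 2) * (1 - c i ^ 2) := by gcongr

theorem cos_spectral_expansion_and_bound_general
    (n : ℕ) (hn : 0 < n) (A : Matrix (Fin n) (Fin n) ℝ)
    (lam : Fin n → ℝ)
    (v : Fin n → Fin n → ℝ)
    (horth : ∀ i j, v i ⬝ᵥ v j = if i = j then (1 : ℝ) else 0)
    (hdecomp : A = ∑ i, lam i • vecMulVec (v i) (v i))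
    (x : Fin n → ℝ)
    (c : Fin n → ℝ) (hc : ∀ i, c i = (v i ⬝ᵥ x) / nrm x)
    (μ : Fin n → ℝ) (hμ : ∀ i, μ i = lam i / frob A) :
    (x ⬝ᵥ A.mulVec x) / ((x ⬝ᵥ x) * frob A) = ∑ i, μ i * (c i) ^ 2 ∧
      (x ⬝ᵥ A.mulVec x) / ((x ⬝ᵥ x) * frob A)
        ≤ μ ⟨0, hn⟩ * (c ⟨0, hn⟩) ^ 2
          + Real.sqrt (1 - (μ ⟨0, hn⟩) ^ 2) * (1 - (c ⟨0, hn⟩) ^ 2) := by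
  set V : Matrix (Fin n) (Fin n) ℝ := of v
  have hV : V * Vᵀ = 1 := by
    ext i j
    simp [V, mul_apply, one_apply, ← horth i j, dotProduct]
  have hVx : ∀ i, (V *ᵥ x) i = v i ⬝ᵥ x := fun i => rfl
  have hA : A = Vᵀ * diagonal lam * V := hdecomp.trans (sum_smul_vecMulVec_self_eq lam v)
  have hexpansion : (x ⬝ᵥ A *ᵥ x) / ((x ⬝ᵥ x) * frob A) = ∑ i, μ i * c i ^ 2 := by
    rw [hA, dotProduct_transpose_mul_diagonal_mul_mulVec, ← hA, Finset.sum_div]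
    refine Finset.sum_congr rfl fun i _ => ?_
    rw [hμ, hc, div_pow, nrm_sq, ← hVx]
    ring
  have hμ_sq : ∑ i, μ i ^ 2 ≤ 1 := by
    simp only [hμ]
    exact sum_div_sq_le_one (hA ▸ frob_sq_transpose_mul_diagonal_mul hV lam).symm
  have hc_sq : ∑ i, c i ^ 2 ≤ 1 := by
    simp only [hc, ← hVx]
    refine sum_div_sq_le_one ?_
    rw [nrm_sq, ← dotProduct_mulVec_self_of_mul_transpose_eq_one hV x]
    simp only [dotProduct, sq]
  rw [hexpansion]
  exact ⟨rfl, sum_mul_sq_le_of_sum_sq_le_one (Finset.mem_univ _) hμ_sq hc_sq⟩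

/-- with the spectral decomposition `A = Σᵢ λᵢ vᵢvᵢᵀ`, `cᵢ = vᵢᵀx/‖x‖` and
`μᵢ = λᵢ/‖A‖_F`, we have `cos(A, xxᵀ) = Σᵢ μᵢcᵢ²` and
`cos(A, xxᵀ) ≤ μ₁c₁² + √(1 - μ₁²)(1 - c₁²)`. -/
theorem cos_spectral_expansion_and_bound
    (n : ℕ) (hn : 0 < n) (A : Matrix (Fin n) (Fin n) ℝ)
    (lam : Fin n → ℝ) (hmono : Antitone lam)
    (v : Fin n → Fin n → ℝ)
    (horth : ∀ i j, v i ⬝ᵥ v j = if i = j then (1 : ℝ) else 0)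
    (hdecomp : A = ∑ i, lam i • vecMulVec (v i) (v i))
    (x : Fin n → ℝ) (hx : x ≠ 0)
    (c : Fin n → ℝ) (hc : ∀ i, c i = (v i ⬝ᵥ x) / nrm x)
    (μ : Fin n → ℝ) (hμ : ∀ i, μ i = lam i / frob A) :
    (x ⬝ᵥ A.mulVec x) / ((x ⬝ᵥ x) * frob A) = ∑ i, μ i * (c i) ^ 2 ∧
      (x ⬝ᵥ A.mulVec x) / ((x ⬝ᵥ x) * frob A)
        ≤ μ ⟨0, hn⟩ * (c ⟨0, hn⟩) ^ 2
          + Real.sqrt (1 - (μ ⟨0, hn⟩) ^ 2) * (1 - (c ⟨0, hn⟩) ^ 2) :=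
  cos_spectral_expansion_and_bound_general n hn A lam v horth hdecomp x c hc μ hμ
end

section
/- Let n be an even positive integer, let y ∈ ℝ^{n/2} be a nonzero vector, let x = (y, y)ᵀ ∈ ℝⁿ, and let A be the n×n block-diagonal matrix with two diagonal blocks both equal to yyᵀ (and zero off-diagonal blocks). Then cos(A, xxᵀ) = 1/√2, the matrix A has rank two, its two nonzero eigenvalues are both equal to ‖y‖₂², and the vector v₁ = (y, 0)ᵀ is an eigenvector of A for the eigenvalue ‖y‖₂² with cos(v₁, x)² = 1/2. -/
/-!
Both diagonal blocks of `A = diag(yyᵀ, yyᵀ)` act as `s = ‖y‖²` on `y` and as `0` on `y^⊥`, so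
`(y, 0)`, `(0, y)` and hence `x = (y, y)` are eigenvectors for `s`, and
`charpoly A = (X^(m-1) (X - s))²`. Thus `xᵀAx = s ‖x‖² = 2s²`, while `‖A‖_F = √2 s` because
`‖yyᵀ‖_F = ‖y‖²`. The rank is that of `A = N Nᵀ` with `N = diag(y, y)`, which equals the rank of
`Nᵀ N = diag(s, s)`.
-/

open Matrix Polynomial BigOperators

section

variable {m n : Type*} [Fintype m] [Fintype n]

lemma dotProduct_self_eq_sum_sq (v : m → ℝ) : v ⬝ᵥ v = ∑ i, v i ^ 2 := by
  simp only [dotProduct, sq]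

lemma sq_nrm (v : m → ℝ) : nrm v ^ 2 = v ⬝ᵥ v := by
  rw [nrm, Real.sq_sqrt (by positivity), dotProduct_self_eq_sum_sq]

lemma sq_dotProduct_div_nrm_mul_nrm (u v : m → ℝ) :
    ((u ⬝ᵥ v) / (nrm u * nrm v)) ^ 2 = (u ⬝ᵥ v) ^ 2 / ((u ⬝ᵥ u) * (v ⬝ᵥ v)) := by
  rw [div_pow, mul_pow, sq_nrm, sq_nrm]

lemma sq_frob (A : Matrix m m ℝ) : frob A ^ 2 = ∑ i, ∑ j, A i j ^ 2 :=
  Real.sq_sqrt (by positivity)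

lemma frob_vecMulVec (u v : m → ℝ) : frob (vecMulVec u v) = nrm u * nrm v := by
  rw [frob, nrm, nrm, ← Real.sqrt_mul (by positivity), Finset.sum_mul_sum]
  simp only [vecMulVec_apply, mul_pow]

lemma frob_fromBlocks_zero_zero (A : Matrix m m ℝ) (D : Matrix n n ℝ) :
    frob (fromBlocks A 0 0 D) = √(frob A ^ 2 + frob D ^ 2) := by
  rw [sq_frob, sq_frob, frob]
  simp [Fintype.sum_sum_type]

lemma fromBlocks_vecMulVec_self_mulVec_sumElim (u a : m → ℝ) (v b : n → ℝ) :
    fromBlocks (vecMulVec u u) 0 0 (vecMulVec v v) *ᵥ Sum.elim a b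
      = Sum.elim ((u ⬝ᵥ a) • u) ((v ⬝ᵥ b) • v) := by
  simp [fromBlocks_mulVec, vecMulVec_mulVec]

lemma rank_fromBlocks_vecMulVec_self [DecidableEq m] [DecidableEq n] {u : m → ℝ} {v : n → ℝ}
    (hu : u ≠ 0) (hv : v ≠ 0) :
    (fromBlocks (vecMulVec u u) 0 0 (vecMulVec v v)).rank = 2 := by
  set N : Matrix (m ⊕ n) (Unit ⊕ Unit) ℝ :=
    fromBlocks (replicateCol Unit u) 0 0 (replicateCol Unit v)
  have hNNt : fromBlocks (vecMulVec u u) 0 0 (vecMulVec v v) = N * Nᵀ := by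
    simp [N, fromBlocks_transpose, fromBlocks_multiply, vecMulVec_eq Unit]
  have hNtN : Nᵀ * N = diagonal (Sum.elim (fun _ => u ⬝ᵥ u) (fun _ => v ⬝ᵥ v)) := by
    ext (i | i) (j | j) <;> simp [N, fromBlocks_transpose, fromBlocks_multiply]
  have hdiag : ∀ i : Unit ⊕ Unit, Sum.elim (fun _ => u ⬝ᵥ u) (fun _ => v ⬝ᵥ v) i ≠ 0 := by
    rintro (_ | _) <;> simpa [dotProduct_self_eq_zero]
  rw [hNNt, rank_self_mul_transpose, ← rank_transpose_mul_self, hNtN, rank_diagonal,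
    Fintype.card_subtype, Finset.filter_true_of_mem fun i _ => hdiag i]
  rfl

end

lemma charpoly_vecMulVec_eq_X_pow_mul {n R : Type*} [Fintype n] [DecidableEq n] [Nonempty n]
    [CommRing R] (u v : n → R) :
    (vecMulVec u v).charpoly = X ^ (Fintype.card n - 1) * (X - C (u ⬝ᵥ v)) := by
  obtain ⟨k, hk⟩ := Nat.exists_eq_succ_of_ne_zero (Fintype.card_ne_zero (α := n))
  rw [charpoly_vecMulVec, hk, Nat.succ_sub_one, smul_eq_C_mul, pow_succ]
  ring

/-- the block-diagonal matrix `A = diag(yyᵀ, yyᵀ)` and `x = (y, y)ᵀ` satisfy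
`cos(A, xxᵀ) = 1/√2`, `rank A = 2`, the two nonzero eigenvalues of `A` both equal `‖y‖₂²`
(i.e. `charpoly A = X^(2m-2) (X - ‖y‖₂²)²`), and `v₁ = (y, 0)ᵀ` is an eigenvector for the
eigenvalue `‖y‖₂²` with `cos(v₁, x)² = 1/2`. -/
theorem block_diagonal_counterexample
    (m : ℕ) (hm : 0 < m) (y : Fin m → ℝ) (hy : y ≠ 0)
    (x : Fin m ⊕ Fin m → ℝ) (hx : x = Sum.elim y y)
    (A : Matrix (Fin m ⊕ Fin m) (Fin m ⊕ Fin m) ℝ)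
    (hA : A = Matrix.fromBlocks (vecMulVec y y) 0 0 (vecMulVec y y))
    (v₁ : Fin m ⊕ Fin m → ℝ) (hv : v₁ = Sum.elim y 0) :
    (x ⬝ᵥ A.mulVec x) / ((x ⬝ᵥ x) * frob A) = 1 / Real.sqrt 2 ∧
      A.rank = 2 ∧
      A.charpoly = X ^ (2 * m - 2) * (X - C (∑ i, (y i) ^ 2)) ^ 2 ∧
      A.mulVec v₁ = (∑ i, (y i) ^ 2) • v₁ ∧
      ((v₁ ⬝ᵥ x) / (nrm v₁ * nrm x)) ^ 2 = 1 / 2 := by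
  have : NeZero m := ⟨hm.ne'⟩
  set s := y ⬝ᵥ y with hs_def
  have hs : 0 < s := by simpa using dotProduct_self_star_pos_iff.mpr hy
  rw [← dotProduct_self_eq_sum_sq]
  have hAx : A *ᵥ x = s • x := by
    rw [hA, hx, fromBlocks_vecMulVec_self_mulVec_sumElim]
    ext (i | i) <;> rfl
  have hxx : x ⬝ᵥ x = 2 * s := by
    rw [hx, sumElim_dotProduct_sumElim]
    ring
  have hfrob : frob A = √2 * s := by
    rw [hA, frob_fromBlocks_zero_zero, frob_vecMulVec, ← sq, sq_nrm, ← two_mul,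
      Real.sqrt_mul zero_le_two, Real.sqrt_sq hs.le]
  refine ⟨?_, hA ▸ rank_fromBlocks_vecMulVec_self hy hy, ?_, ?_, ?_⟩
  · rw [hAx, dotProduct_smul, hxx, hfrob, smul_eq_mul]
    field_simp
  · rw [hA, charpoly_fromBlocks_zero₁₂, charpoly_vecMulVec_eq_X_pow_mul, Fintype.card_fin,
      show 2 * m - 2 = (m - 1) + (m - 1) by omega]
    ring
  · rw [hA, hv, fromBlocks_vecMulVec_self_mulVec_sumElim]
    ext (i | i) <;> simp
  · rw [sq_dotProduct_div_nrm_mul_nrm, hxx, hv, hx]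
    simp only [sumElim_dotProduct_sumElim, zero_dotProduct, add_zero, ← hs_def]
    field_simp
end

section
/- For integers 0 < k ≤ n, let P^n_k denote the set of vectors in ℝⁿ having at most k strictly positive entries. Then the maximum of cos(x, 𝟙) = (xᵀ𝟙)/(√n·‖x‖₂) over nonzero x ∈ P^n_k equals √(k/n). -/
open Matrix BigOperators

/-- for `0 < k ≤ n`, the maximum of `cos(x, 𝟙) = (Σᵢ xᵢ)/(√n ‖x‖₂)` over
nonzero vectors `x ∈ ℝⁿ` with at most `k` strictly positive entries equals `√(k/n)`. -/
theorem max_cos_with_ones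
    (n k : ℕ) (hk : 0 < k) (hkn : k ≤ n) :
    IsGreatest
      {c : ℝ | ∃ x : Fin n → ℝ, x ≠ 0 ∧
        (Finset.univ.filter fun i => 0 < x i).card ≤ k ∧
        c = (∑ i, x i) / (Real.sqrt n * nrm x)}
      (Real.sqrt ((k : ℝ) / n)) := by
  have hn : 0 < n := hk.trans_le hkn
  have hcardk : (Finset.univ.filter fun i : Fin n => (i : ℕ) < k).card = k := by
    have : (Finset.univ.filter fun i : Fin n => (i : ℕ) < k) =
        (Finset.range k).attachFin (fun m hm => (Finset.mem_range.mp hm).trans_le hkn) := by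
      ext i
      simp [Finset.mem_attachFin]
    rw [this, Finset.card_attachFin, Finset.card_range]
  constructor
  · refine ⟨fun i => if (i : ℕ) < k then 1 else 0, ?_, ?_, ?_⟩
    · intro h
      have := congrFun h ⟨0, hn⟩
      simp [hk] at this
    · have : (Finset.univ.filter fun i : Fin n =>
          (0:ℝ) < if (i:ℕ) < k then 1 else 0) =
          Finset.univ.filter fun i : Fin n => (i : ℕ) < k := by
        ext i
        by_cases h : (i:ℕ) < k <;> simp [h]
      rw [this, hcardk]
    · have hsum : (∑ i : Fin n, if (i:ℕ) < k then (1:ℝ) else 0) = k := by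
        rw [Finset.sum_boole]
        exact_mod_cast hcardk
      have hsq : (∑ i : Fin n, (if (i:ℕ) < k then (1:ℝ) else 0) ^ 2) = k := by
        have : ∀ i : Fin n, (if (i:ℕ) < k then (1:ℝ) else 0) ^ 2
            = if (i:ℕ) < k then (1:ℝ) else 0 := by
          intro i; by_cases h : (i:ℕ) < k <;> simp [h]
        simp_rw [this]; exact hsum
      rw [nrm, hsq, hsum, Real.sqrt_div (Nat.cast_nonneg k)]
      have hks : Real.sqrt k * Real.sqrt k = (k:ℝ) := Real.mul_self_sqrt (Nat.cast_nonneg k)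
      have hk0 : (0:ℝ) < Real.sqrt k := Real.sqrt_pos.mpr (by exact_mod_cast hk)
      have hn0 : (0:ℝ) < Real.sqrt n := Real.sqrt_pos.mpr (by exact_mod_cast hn)
      field_simp
      nlinarith [hks]
  · rintro c ⟨x, hx0, hcard, rfl⟩
    have hnrm : 0 < nrm x := by
      obtain ⟨i, hi⟩ := Function.ne_iff.mp hx0
      apply Real.sqrt_pos.mpr
      exact Finset.sum_pos' (fun j _ => sq_nonneg _)
        ⟨i, Finset.mem_univ i, pow_two_pos_of_ne_zero hi⟩
    have hsqrtn : (0:ℝ) < Real.sqrt n := Real.sqrt_pos.mpr (by exact_mod_cast hn)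
    rw [Real.sqrt_div (Nat.cast_nonneg k)]
    by_cases hs : (∑ i, x i) ≤ 0
    · have h1 : (∑ i, x i) / (Real.sqrt n * nrm x) ≤ 0 :=
        div_nonpos_of_nonpos_of_nonneg hs (by positivity)
      exact h1.trans (by positivity)
    · push_neg at hs
      set S := Finset.univ.filter fun i => 0 < x i with hS
      have h1 : (∑ i, x i) ≤ ∑ i ∈ S, x i := by
        rw [← Finset.sum_filter_add_sum_filter_not Finset.univ (fun i => 0 < x i) x]
        have : (∑ i ∈ Finset.univ.filter fun i => ¬ 0 < x i, x i) ≤ 0 :=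
          Finset.sum_nonpos fun i hi => le_of_not_gt (Finset.mem_filter.mp hi).2
        linarith
      have h2 : (∑ i ∈ S, x i) ^ 2 ≤ (k : ℝ) * ∑ i, (x i) ^ 2 := by
        calc (∑ i ∈ S, x i) ^ 2 ≤ S.card * ∑ i ∈ S, (x i) ^ 2 := by
              exact sq_sum_le_card_mul_sum_sq
          _ ≤ (k : ℝ) * ∑ i, (x i) ^ 2 := by
              apply mul_le_mul (by exact_mod_cast hcard)
                (Finset.sum_le_sum_of_subset_of_nonneg (Finset.subset_univ S)
                  fun i _ _ => sq_nonneg _)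
                (Finset.sum_nonneg fun i _ => sq_nonneg _) (Nat.cast_nonneg k)
      have h3 : (∑ i, x i) ≤ Real.sqrt k * nrm x := by
        unfold nrm
        have hS0 : 0 ≤ ∑ i ∈ S, x i := le_trans hs.le h1
        have : (∑ i ∈ S, x i) ≤ Real.sqrt ((k : ℝ) * ∑ i, (x i) ^ 2) := by
          rw [Real.le_sqrt hS0]
          · exact h2
          · positivity
        rw [Real.sqrt_mul (Nat.cast_nonneg k)] at this
        exact h1.trans this
      have heq : Real.sqrt k / Real.sqrt n = (Real.sqrt k * nrm x) / (Real.sqrt n * nrm x) := by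
        rw [mul_div_mul_right _ _ hnrm.ne']
      rw [heq]
      gcongr
end

section
/- For integers 0 < k ≤ n and a nonzero vector x ∈ ℝⁿ with at most k strictly positive entries, one has cos(x, 𝟙) = √(k/n) if and only if x has exactly k entries equal to one common positive value and its remaining n − k entries equal to zero. -/
open Matrix BigOperators

/-!
Let `p` be the number of positive entries of `x` and `t > 0`. Pointwise, `2 t a ≤ a² + t²` for
`a > 0` and `2 t a ≤ a²` for `a ≤ 0`, with equality exactly when `a = t`, resp. `a = 0`; summing,
`2 t ∑ xᵢ ≤ ‖x‖² + p t² ≤ ‖x‖² + k t²`. For `t = ‖x‖ / √k` the right-hand side is `2 ‖x‖²`, so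
`∑ xᵢ ≤ √k ‖x‖`, i.e. `cos(x, 𝟙) ≤ √(k/n)`, and equality forces every entry to be `t` or `0`
and `p = k`.
-/

open Finset

section

variable {ι : Type*} [Fintype ι]

lemma sq_nrm_s9 (v : ι → ℝ) : nrm v ^ 2 = ∑ i, v i ^ 2 :=
  Real.sq_sqrt (sum_nonneg fun i _ => sq_nonneg (v i))

lemma nrm_pos {v : ι → ℝ} (hv : v ≠ 0) : 0 < nrm v := by
  obtain ⟨i, hi⟩ := Function.ne_iff.mp hv
  exact Real.sqrt_pos.mpr
    (sum_pos' (fun j _ => sq_nonneg (v j)) ⟨i, mem_univ i, pow_two_pos_of_ne_zero hi⟩)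

lemma two_mul_mul_le_sq_add_ite {t : ℝ} (ht : 0 < t) (a : ℝ) :
    2 * t * a ≤ a ^ 2 + if 0 < a then t ^ 2 else 0 := by
  split_ifs with ha
  · nlinarith [sq_nonneg (a - t)]
  · nlinarith

lemma two_mul_mul_eq_sq_add_ite_iff {t : ℝ} (ht : 0 < t) (a : ℝ) :
    2 * t * a = a ^ 2 + (if 0 < a then t ^ 2 else 0) ↔ a = t ∨ a = 0 := by
  split_ifs with ha
  · have hsq : 2 * t * a = a ^ 2 + t ^ 2 ↔ (a - t) ^ 2 = 0 := by
      constructor <;> intro h <;> linarith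
    rw [hsq, pow_eq_zero_iff two_ne_zero, sub_eq_zero]
    exact ⟨Or.inl, fun h => h.resolve_right ha.ne'⟩
  · refine ⟨fun h => Or.inr (by nlinarith), ?_⟩
    rintro (rfl | rfl) <;> simp_all

lemma sum_sq_add_ite_eq (t : ℝ) (x : ι → ℝ) :
    ∑ i, (x i ^ 2 + if 0 < x i then t ^ 2 else 0) =
      ∑ i, x i ^ 2 + (univ.filter fun i => 0 < x i).card * t ^ 2 := by
  rw [sum_add_distrib, ← sum_filter, sum_const, nsmul_eq_mul]

lemma two_mul_mul_sum_le {t : ℝ} (ht : 0 < t) (x : ι → ℝ) :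
    2 * t * ∑ i, x i ≤ ∑ i, x i ^ 2 + (univ.filter fun i => 0 < x i).card * t ^ 2 := by
  rw [← sum_sq_add_ite_eq, mul_sum]
  exact sum_le_sum fun i _ => two_mul_mul_le_sq_add_ite ht (x i)

lemma two_mul_mul_sum_eq_iff {t : ℝ} (ht : 0 < t) (x : ι → ℝ) :
    2 * t * ∑ i, x i = ∑ i, x i ^ 2 + (univ.filter fun i => 0 < x i).card * t ^ 2 ↔
      ∀ i, x i = t ∨ x i = 0 := by
  rw [← sum_sq_add_ite_eq, mul_sum,
    sum_eq_sum_iff_of_le fun i _ => two_mul_mul_le_sq_add_ite ht (x i)]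
  simp only [mem_univ, true_implies, two_mul_mul_eq_sq_add_ite_iff ht]

lemma sum_comp_eq_card_smul {x : ι → ℝ} {t : ℝ} (hx : ∀ i, x i = t ∨ x i = 0)
    (f : ℝ → ℝ) (hf : f 0 = 0) :
    ∑ i, f (x i) = (univ.filter fun i => x i = t).card • f t := by
  rw [← sum_const, sum_filter]
  refine sum_congr rfl fun i _ => ?_
  by_cases h : x i = t
  · simp [h]
  · rw [if_neg h, (hx i).resolve_left h, hf]

lemma sum_eq_sqrt_mul_nrm_iff {k : ℕ} (hk : 0 < k) {x : ι → ℝ} (hx : x ≠ 0)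
    (hcard : (univ.filter fun i => 0 < x i).card ≤ k) :
    ∑ i, x i = √k * nrm x ↔ ∃ t : ℝ, 0 < t ∧ (univ.filter fun i => x i = t).card = k ∧
      ∀ i, x i = t ∨ x i = 0 := by
  have hkR : (0 : ℝ) < k := by exact_mod_cast hk
  constructor
  · intro h
    set t := nrm x / √k with ht_def
    have ht : 0 < t := div_pos (nrm_pos hx) (Real.sqrt_pos.2 hkR)
    have heq : 2 * t * ∑ i, x i = ∑ i, x i ^ 2 + k * t ^ 2 := by
      rw [h, ← sq_nrm_s9, ht_def, div_pow, Real.sq_sqrt hkR.le]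
      field_simp
      ring
    have hpk : (univ.filter fun i => 0 < x i).card = k := by
      have hle := two_mul_mul_sum_le ht x
      have hkp : (k : ℝ) ≤ (univ.filter fun i => 0 < x i).card :=
        le_of_mul_le_mul_right (by linarith) (pow_pos ht 2)
      exact le_antisymm hcard (by exact_mod_cast hkp)
    have hvals := (two_mul_mul_sum_eq_iff ht x).1 (by rw [heq, hpk])
    refine ⟨t, ht, ?_, hvals⟩
    rw [← hpk]
    congr 1
    refine filter_congr fun i _ => ?_
    rcases hvals i with h | h <;> simp [h, ht, ht.ne]
  · rintro ⟨t, ht, htk, hvals⟩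
    have hsum : ∑ i, x i = k * t := by
      simpa [htk] using sum_comp_eq_card_smul hvals id rfl
    have hsum_sq : ∑ i, x i ^ 2 = k * t ^ 2 := by
      simpa [htk] using sum_comp_eq_card_smul hvals (· ^ 2) (zero_pow two_ne_zero)
    rw [hsum, nrm, hsum_sq, Real.sqrt_mul hkR.le, Real.sqrt_sq ht.le, ← mul_assoc,
      Real.mul_self_sqrt hkR.le]

end

/-- for `0 < k ≤ n` and a nonzero `x` with at most `k` strictly positive
entries, `cos(x, 𝟙) = √(k/n)` iff `x` has exactly `k` entries equal to a common positive
value and all its remaining entries equal to zero. -/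
theorem cos_with_ones_eq_iff
    (n k : ℕ) (hk : 0 < k) (hkn : k ≤ n)
    (x : Fin n → ℝ) (hx : x ≠ 0)
    (hcard : (Finset.univ.filter fun i => 0 < x i).card ≤ k) :
    (∑ i, x i) / (Real.sqrt n * nrm x) = Real.sqrt ((k : ℝ) / n) ↔
      ∃ t : ℝ, 0 < t ∧ (Finset.univ.filter fun i => x i = t).card = k ∧
        ∀ i, x i = t ∨ x i = 0 := by
  have hn : (0 : ℝ) < n := by exact_mod_cast hk.trans_le hkn
  have hden : 0 < √n * nrm x := mul_pos (Real.sqrt_pos.2 hn) (nrm_pos hx)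
  rw [← sum_eq_sqrt_mul_nrm_iff hk hx hcard, div_eq_iff hden.ne', Real.sqrt_div' _ hn.le,
    ← mul_assoc, div_mul_cancel₀ _ (Real.sqrt_pos.2 hn).ne']
end

section
/- Let 0 < k < n be integers and let x ∈ ℝⁿ be a nonzero vector with cos(x, 𝟙) ≥ √(k/n). Then x has at least k + 1 nonnegative entries; moreover, either x has exactly k strictly positive entries all equal to one common positive value with all other entries zero, or x has at least k + 1 strictly positive entries. -/
open Matrix BigOperators

/-- for `0 < k < n`, if a nonzero `x ∈ ℝⁿ` satisfies `cos(x, 𝟙) ≥ √(k/n)`,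
then `x` has at least `k + 1` nonnegative entries; moreover, either `x` has exactly `k`
strictly positive entries all equal to a common positive value with all other entries
zero, or `x` has at least `k + 1` strictly positive entries. -/
theorem cos_with_ones_ge_entries
    (n k : ℕ) (hk : 0 < k) (hkn : k < n)
    (x : Fin n → ℝ) (hx : x ≠ 0)
    (h : Real.sqrt ((k : ℝ) / n) ≤ (∑ i, x i) / (Real.sqrt n * nrm x)) :
    k + 1 ≤ (Finset.univ.filter fun i => 0 ≤ x i).card ∧
      ((∃ t : ℝ, 0 < t ∧ (Finset.univ.filter fun i => x i = t).card = k ∧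
          ∀ i, x i = t ∨ x i = 0)
        ∨ k + 1 ≤ (Finset.univ.filter fun i => 0 < x i).card) := by
  have hn : (0:ℝ) < n := by exact_mod_cast hk.trans hkn
  have hkR : (0:ℝ) < k := by exact_mod_cast hk
  -- positivity of the square sum
  have hsum2 : (0:ℝ) < ∑ i, (x i)^2 := by
    obtain ⟨i, hi⟩ := Function.ne_iff.mp hx
    exact Finset.sum_pos' (fun j _ => sq_nonneg _)
      ⟨i, Finset.mem_univ i, pow_pos (abs_pos.mpr hi) 2 |>.trans_eq (by rw [sq_abs])⟩
  have hnrm : 0 < nrm x := Real.sqrt_pos.mpr hsum2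
  have hnrm2 : (nrm x)^2 = ∑ i, (x i)^2 := Real.sq_sqrt hsum2.le
  set s := ∑ i, x i with hs_def
  have hden : 0 < Real.sqrt n * nrm x := by positivity
  have hmul : Real.sqrt ((k:ℝ)/n) * (Real.sqrt n * nrm x) ≤ s := by
    rw [← le_div_iff₀ hden]; exact h
  have hsqrtk : Real.sqrt ((k:ℝ)/n) * Real.sqrt n = Real.sqrt k := by
    rw [← Real.sqrt_mul (by positivity), div_mul_cancel₀ _ hn.ne']
  have hks : Real.sqrt k * nrm x ≤ s := by
    calc Real.sqrt k * nrm x = Real.sqrt ((k:ℝ)/n) * (Real.sqrt n * nrm x) := by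
          rw [← hsqrtk]; ring
      _ ≤ s := hmul
  have hspos : 0 < s := lt_of_lt_of_le (by positivity) hks
  have hks2 : (k:ℝ) * ∑ i, (x i)^2 ≤ s^2 := by
    have := pow_le_pow_left₀ (by positivity) hks 2
    calc (k:ℝ) * ∑ i, (x i)^2 = (Real.sqrt k * nrm x)^2 := by
          rw [mul_pow, Real.sq_sqrt hkR.le, hnrm2]
      _ ≤ s^2 := this
  set S := Finset.univ.filter (fun i => 0 < x i) with hS_def
  have hsplit : ∑ i ∈ S, x i + ∑ i ∈ Finset.univ.filter (fun i => ¬ 0 < x i), x i = s :=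
    Finset.sum_filter_add_sum_filter_not _ _ _
  have hcompl : ∑ i ∈ Finset.univ.filter (fun i => ¬ 0 < x i), x i ≤ 0 :=
    Finset.sum_nonpos (fun i hi => le_of_not_gt (Finset.mem_filter.mp hi).2)
  have hsS : s ≤ ∑ i ∈ S, x i := by linarith
  have hSpos : 0 < ∑ i ∈ S, x i := lt_of_lt_of_le hspos hsS
  have hcs : (∑ i ∈ S, x i)^2 ≤ (S.card : ℝ) * ∑ i ∈ S, (x i)^2 := by
    have := Finset.sum_mul_sq_le_sq_mul_sq S (fun _ => (1:ℝ)) x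
    simpa using this
  have hsub : ∑ i ∈ S, (x i)^2 ≤ ∑ i, (x i)^2 :=
    Finset.sum_le_sum_of_subset_of_nonneg (Finset.filter_subset _ _)
      (fun i _ _ => sq_nonneg _)
  have hchain : (k:ℝ) * ∑ i, (x i)^2 ≤ (S.card : ℝ) * ∑ i, (x i)^2 := by
    have h1 : s^2 ≤ (∑ i ∈ S, x i)^2 := pow_le_pow_left₀ hspos.le hsS 2
    have h2 : (S.card : ℝ) * ∑ i ∈ S, (x i)^2 ≤ (S.card : ℝ) * ∑ i, (x i)^2 :=
      mul_le_mul_of_nonneg_left hsub (by positivity)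
    linarith
  have hkcard : k ≤ S.card := by
    have : (k:ℝ) ≤ (S.card : ℝ) := le_of_mul_le_mul_right (by linarith) hsum2
    exact_mod_cast this
  rcases lt_or_eq_of_le hkcard with hlt | heq
  · refine ⟨le_trans hlt (Finset.card_le_card ?_), Or.inr hlt⟩
    intro i hi
    exact Finset.mem_filter.mpr ⟨Finset.mem_univ i, (Finset.mem_filter.mp hi).2.le⟩
  · -- S.card = k : all inequalities are equalities
    have hcard : (S.card : ℝ) = k := by exact_mod_cast heq.symm
    have hcs' : (∑ i ∈ S, x i)^2 ≤ (k:ℝ) * ∑ i ∈ S, (x i)^2 := by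
      rw [hcard] at hcs; exact hcs
    have hmul2 : (k:ℝ) * ∑ i ∈ S, (x i)^2 ≤ (k:ℝ) * ∑ i, (x i)^2 :=
      mul_le_mul_of_nonneg_left hsub hkR.le
    have h1 : s^2 ≤ (∑ i ∈ S, x i)^2 := pow_le_pow_left₀ hspos.le hsS 2
    have hE : s^2 = (k:ℝ) * ∑ i ∈ S, (x i)^2 := le_antisymm (by linarith) (by linarith)
    have hseq : s = ∑ i ∈ S, x i := by
      have h2 : (∑ i ∈ S, x i)^2 ≤ s^2 := by linarith
      refine le_antisymm hsS ?_
      nlinarith [mul_pos hspos hSpos]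
    -- zero off S
    have hzero : ∀ i, ¬ 0 < x i → x i = 0 := by
      have hsum0 : ∑ i ∈ Finset.univ.filter (fun i => ¬ 0 < x i), x i = 0 := by
        rw [hseq] at hsplit; linarith [hsplit]
      intro i hi
      exact (Finset.sum_eq_zero_iff_of_nonpos
        (fun j hj => le_of_not_gt (Finset.mem_filter.mp hj).2)).mp hsum0 i
        (Finset.mem_filter.mpr ⟨Finset.mem_univ i, hi⟩)
    -- constancy on S
    set m := s / k with hm_def
    have hvar : ∑ i ∈ S, (x i - m)^2 = 0 := by
      have expand : ∑ i ∈ S, (x i - m)^2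
          = ∑ i ∈ S, (x i)^2 - 2*m*(∑ i ∈ S, x i) + (S.card : ℝ)*m^2 := by
        rw [Finset.mul_sum]
        rw [← Finset.sum_sub_distrib]
        have : (S.card : ℝ) * m^2 = ∑ _i ∈ S, m^2 := by
          rw [Finset.sum_const, nsmul_eq_mul]
        rw [this, ← Finset.sum_add_distrib]
        exact Finset.sum_congr rfl (fun i _ => by ring)
      have hk0 : (k:ℝ) ≠ 0 := hkR.ne'
      have hrw : ∑ i ∈ S, (x i)^2 - 2*(s/k)*s + (k:ℝ)*(s/k)^2
          = ∑ i ∈ S, (x i)^2 - s^2/k := by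
        field_simp; ring
      rw [expand, hcard, ← hseq, hm_def, hrw, hE, mul_comm, mul_div_assoc,
        div_self hk0, mul_one, sub_self]
    have hconst : ∀ i ∈ S, x i = m := by
      intro i hi
      have := (Finset.sum_eq_zero_iff_of_nonneg (fun j _ => sq_nonneg _)).mp hvar i hi
      have := sq_eq_zero_iff.mp this
      linarith
    have hmpos : 0 < m := by
      have hSne : S.Nonempty := Finset.card_pos.mp (by omega)
      obtain ⟨i, hi⟩ := hSne
      have := hconst i hi
      have hxi : 0 < x i := (Finset.mem_filter.mp hi).2
      linarith
    have hfeq : Finset.univ.filter (fun i => x i = m) = S := by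
      ext i
      simp only [Finset.mem_filter, Finset.mem_univ, true_and, hS_def]
      constructor
      · intro hxi; rw [hxi]; exact hmpos
      · intro hxi; exact hconst i (Finset.mem_filter.mpr ⟨Finset.mem_univ i, hxi⟩)
    have hall : ∀ i, x i = m ∨ x i = 0 := by
      intro i
      by_cases hxi : 0 < x i
      · exact Or.inl (hconst i (Finset.mem_filter.mpr ⟨Finset.mem_univ i, hxi⟩))
      · exact Or.inr (hzero i hxi)
    refine ⟨?_, Or.inl ⟨m, hmpos, by rw [hfeq, ← heq], hall⟩⟩
    have : Finset.univ.filter (fun i => 0 ≤ x i) = Finset.univ := by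
      ext i
      simp only [Finset.mem_filter, Finset.mem_univ, true_and, iff_true]
      rcases hall i with h' | h' <;> simp [h', hmpos.le]
    rw [this, Finset.card_univ, Fintype.card_fin]
    omega
end

section
/- Let 1 ≤ k < n/2 and let A be the n×n block-diagonal matrix with diagonal blocks J_k (the k×k all-ones matrix) and J_{n−k} (the (n−k)×(n−k) all-ones matrix) and zero off-diagonal blocks. Then 𝟙ᵀA𝟙 = √((n−k)² + k²)·‖A‖_F (i.e., the hypothesis of the signed-eigenvector theorem holds with equality), and the vector with the first k entries equal to 0 and the last n − k entries equal to 1 is an eigenvector of A associated with its largest eigenvalue n − k, having exactly n − k positive entries. -/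
open Matrix Polynomial BigOperators

/-- for `A = diag(J_k, J_{n-k})` with `1 ≤ k < n/2`, the hypothesis
`𝟙ᵀA𝟙 ≥ √((n-k)² + k²) ‖A‖_F` holds with equality, and the vector with the first `k`
entries `0` and the remaining `n - k` entries `1` is an eigenvector of `A` for its largest
eigenvalue `n - k`, having exactly `n - k` positive entries. -/
theorem block_all_ones_optimality
    (n k : ℕ) (hk : 1 ≤ k) (hkn : 2 * k < n)
    (A : Matrix (Fin k ⊕ Fin (n - k)) (Fin k ⊕ Fin (n - k)) ℝ)
    (hA : A = Matrix.fromBlocks (Matrix.of fun _ _ => (1 : ℝ)) 0 0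
      (Matrix.of fun _ _ => (1 : ℝ)))
    (v : Fin k ⊕ Fin (n - k) → ℝ)
    (hv : v = Sum.elim (0 : Fin k → ℝ) (1 : Fin (n - k) → ℝ)) :
    (∑ i, ∑ j, A i j) = Real.sqrt (((n : ℝ) - k) ^ 2 + (k : ℝ) ^ 2) * frob A ∧
      A.mulVec v = ((n : ℝ) - k) • v ∧
      (∀ t : ℝ, (∃ w : Fin k ⊕ Fin (n - k) → ℝ, w ≠ 0 ∧ A.mulVec w = t • w) →
        t ≤ (n : ℝ) - k) ∧
      (Finset.univ.filter fun i => 0 < v i).card = n - k := by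
  have hkn' : k ≤ n := le_of_lt (lt_of_le_of_lt (by omega) hkn)
  have hcast : ((n - k : ℕ) : ℝ) = (n : ℝ) - k := by
    rw [Nat.cast_sub hkn']
  have hklt : (k : ℝ) < (n : ℝ) - k := by
    rw [← hcast]; exact_mod_cast by omega
  have hnkpos : (0 : ℝ) < (n : ℝ) - k := lt_trans (by exact_mod_cast hk) hklt
  refine ⟨?_, ?_, ?_, ?_⟩
  · have h1 : (∑ i, ∑ j, A i j) = ((n:ℝ) - k)^2 + (k:ℝ)^2 := by
      simp [hA, Fintype.sum_sum_type, Matrix.fromBlocks, ← hcast]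
      ring
    have h2 : frob A = Real.sqrt (((n:ℝ) - k)^2 + (k:ℝ)^2) := by
      unfold frob
      congr 1
      simp [hA, Fintype.sum_sum_type, Matrix.fromBlocks, ← hcast]
      ring
    rw [h1, h2]
    exact (Real.mul_self_sqrt (by positivity)).symm
  · subst hA hv
    funext i
    cases i with
    | inl i => simp [Matrix.mulVec, dotProduct, Fintype.sum_sum_type, Matrix.fromBlocks]
    | inr i =>
      simp [Matrix.mulVec, dotProduct, Fintype.sum_sum_type, Matrix.fromBlocks, hcast]
  · rintro t ⟨w, hw0, hw⟩
    subst hA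
    by_cases ht : t ≤ 0
    · linarith
    push_neg at ht
    set S₁ := ∑ j : Fin k, w (Sum.inl j) with hS1
    set S₂ := ∑ j : Fin (n - k), w (Sum.inr j) with hS2
    have hl : ∀ i : Fin k, t * w (Sum.inl i) = S₁ := by
      intro i
      have := congrFun hw (Sum.inl i)
      simp [Matrix.mulVec, dotProduct, Fintype.sum_sum_type, Matrix.fromBlocks] at this
      rw [← this]
    have hr : ∀ i : Fin (n - k), t * w (Sum.inr i) = S₂ := by
      intro i
      have := congrFun hw (Sum.inr i)
      simp [Matrix.mulVec, dotProduct, Fintype.sum_sum_type, Matrix.fromBlocks] at this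
      rw [← this]
    by_cases hR : ∀ i : Fin (n - k), w (Sum.inr i) = 0
    · -- right block zero; left block must be nonzero
      have hLne : ∃ i : Fin k, w (Sum.inl i) ≠ 0 := by
        by_contra h
        push_neg at h
        apply hw0
        funext i
        cases i with
        | inl i => exact h i
        | inr i => exact hR i
      obtain ⟨i0, hi0⟩ := hLne
      -- S₁ = t * w i0 ≠ 0, and summing: t * S₁ = k * S₁
      have hsum : t * S₁ = (k : ℝ) * S₁ := by
        calc t * S₁ = ∑ j : Fin k, t * w (Sum.inl j) := by rw [Finset.mul_sum]
        _ = ∑ _j : Fin k, S₁ := by exact Finset.sum_congr rfl fun j _ => hl j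
        _ = (k : ℝ) * S₁ := by simp [mul_comm]
      have hS1ne : S₁ ≠ 0 := by
        rw [← hl i0]
        exact mul_ne_zero (ne_of_gt ht) hi0
      have : t = (k : ℝ) := by
        have := mul_right_cancel₀ hS1ne hsum
        exact this
      linarith
    · push_neg at hR
      obtain ⟨i0, hi0⟩ := hR
      have hsum : t * S₂ = ((n : ℝ) - k) * S₂ := by
        calc t * S₂ = ∑ j : Fin (n-k), t * w (Sum.inr j) := by rw [Finset.mul_sum]
        _ = ∑ _j : Fin (n-k), S₂ := by exact Finset.sum_congr rfl fun j _ => hr j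
        _ = ((n:ℝ) - k) * S₂ := by simp [mul_comm, hcast]
      have hS2ne : S₂ ≠ 0 := by
        rw [← hr i0]
        exact mul_ne_zero (ne_of_gt ht) hi0
      have := mul_right_cancel₀ hS2ne hsum
      linarith
  · subst hv
    have : (Finset.univ.filter fun i : Fin k ⊕ Fin (n-k) =>
        0 < Sum.elim (0 : Fin k → ℝ) (1 : Fin (n-k) → ℝ) i)
        = Finset.univ.image Sum.inr := by
      ext i
      cases i <;> simp
    rw [this, Finset.card_image_of_injective _ Sum.inr_injective]
    simp
end

section
/- Let n be even, let z ∈ {−1, 1}ⁿ be a vector with exactly n/2 entries equal to 1, let M be a real symmetric n×n matrix, and let v₁ be an eigenvector of M associated with its largest eigenvalue λ₁(M), oriented so that cos(v₁, z) > 0. Suppose cos(v₁, z)² ≥ ξ̄ for some ξ̄ ∈ (0, 1]. Define w ∈ {−1,1}ⁿ by wᵢ = 1 if (v₁)ᵢ ≥ 0 and wᵢ = −1 otherwise. Then the number of indices i with wᵢ = zᵢ is at least ξ̄·n; that is, the fraction of vertices correctly classified by splitting indices according to the sign of the entries of v₁ is at least ξ̄. -/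
open Matrix BigOperators

/-- let `z ∈ {−1,1}ⁿ` with exactly `n/2` entries equal to `1` (`n` even),
let `v₁` be an eigenvector of the largest eigenvalue of a symmetric matrix `M`, oriented
so that `cos(v₁, z) > 0`, and suppose `cos(v₁, z)² ≥ ξ̄` with `ξ̄ ∈ (0,1]`. If
`w ∈ {−1,1}ⁿ` is the sign vector of `v₁`, then the number of indices `i` with `wᵢ = zᵢ`
is at least `ξ̄ n`. -/
theorem correctly_classified_fraction
    (n : ℕ) (hpos : 0 < n) (hn : Even n)
    (z : Fin n → ℝ) (hz : ∀ i, z i = 1 ∨ z i = -1)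
    (hzcard : (Finset.univ.filter fun i => z i = 1).card = n / 2)
    (M : Matrix (Fin n) (Fin n) ℝ) (hM : M.IsSymm)
    (lam : ℝ) (v₁ : Fin n → ℝ) (hv₁ : v₁ ≠ 0)
    (heig : M.mulVec v₁ = lam • v₁)
    (hmax : ∀ t : ℝ, (∃ u : Fin n → ℝ, u ≠ 0 ∧ M.mulVec u = t • u) → t ≤ lam)
    (ξ : ℝ) (hξ0 : 0 < ξ) (hξ1 : ξ ≤ 1)
    (hcos : 0 < (v₁ ⬝ᵥ z) / (nrm v₁ * nrm z))
    (hcos2 : ξ ≤ ((v₁ ⬝ᵥ z) / (nrm v₁ * nrm z)) ^ 2)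
    (w : Fin n → ℝ) (hw : w = fun i => if 0 ≤ v₁ i then (1 : ℝ) else -1) :
    ξ * n ≤ (Finset.univ.filter fun i => w i = z i).card := by
  subst hw
  set S := Finset.univ.filter
      (fun i => (if 0 ≤ v₁ i then (1 : ℝ) else -1) = z i) with hS
  -- basic positivity facts
  have hv2 : 0 < ∑ i, (v₁ i) ^ 2 := by
    rcases Function.ne_iff.mp hv₁ with ⟨j, hj⟩
    have hj0 : v₁ j ≠ 0 := by simpa using hj
    have hj' : (0 : ℝ) < (v₁ j) ^ 2 := by positivity
    exact Finset.sum_pos' (fun i _ => sq_nonneg _) ⟨j, Finset.mem_univ j, hj'⟩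
  have hz2 : ∑ i, (z i) ^ 2 = (n : ℝ) := by
    have h1 : ∀ i, (z i) ^ 2 = 1 := fun i => by rcases hz i with h | h <;> simp [h]
    simp [h1]
  have hNv2 : (nrm v₁) ^ 2 = ∑ i, (v₁ i) ^ 2 :=
    Real.sq_sqrt (Finset.sum_nonneg fun i _ => sq_nonneg _)
  have hNz2 : (nrm z) ^ 2 = (n : ℝ) := by
    rw [nrm, Real.sq_sqrt (Finset.sum_nonneg fun i _ => sq_nonneg _), hz2]
  have hNv : 0 < nrm v₁ := Real.sqrt_pos.mpr hv2
  have hNz : 0 < nrm z := by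
    apply Real.sqrt_pos.mpr
    rw [hz2]; exact_mod_cast hpos
  -- the dot product is positive
  have hdot : 0 < v₁ ⬝ᵥ z := by
    rcases div_pos_iff.mp hcos with ⟨h, _⟩ | ⟨_, h⟩
    · exact h
    · exact absurd (mul_pos hNv hNz) (not_lt.mpr h.le)
  -- v₁ ⬝ᵥ z is bounded by the sum of |v₁ i| over the agreement set
  have hle : v₁ ⬝ᵥ z ≤ ∑ i ∈ S, |v₁ i| := by
    rw [dotProduct, hS, Finset.sum_filter]
    apply Finset.sum_le_sum
    intro i _
    by_cases h2 : 0 ≤ v₁ i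
    · rcases hz i with h1 | h1
      · rw [h1, if_pos h2, if_pos rfl, abs_of_nonneg h2]; linarith
      · rw [h1, if_pos h2, if_neg (by norm_num)]; linarith
    · push_neg at h2
      rcases hz i with h1 | h1
      · rw [h1, if_neg (not_le.mpr h2), if_neg (by norm_num)]; linarith
      · rw [h1, if_neg (not_le.mpr h2), if_pos rfl, abs_of_neg h2]; linarith
  -- Cauchy–Schwarz on the agreement set
  have hCS : (∑ i ∈ S, |v₁ i|) ^ 2 ≤ (S.card : ℝ) * ∑ i, (v₁ i) ^ 2 := by
    have h := Finset.sum_mul_sq_le_sq_mul_sq S (fun _ => (1 : ℝ)) (fun i => |v₁ i|)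
    simp only [one_mul, one_pow, sq_abs] at h
    calc (∑ i ∈ S, |v₁ i|) ^ 2
        ≤ (∑ _i ∈ S, (1 : ℝ)) * ∑ i ∈ S, (v₁ i) ^ 2 := h
      _ ≤ (S.card : ℝ) * ∑ i, (v₁ i) ^ 2 := by
          rw [Finset.sum_const, nsmul_eq_mul, mul_one]
          exact mul_le_mul_of_nonneg_left
            (Finset.sum_le_sum_of_subset_of_nonneg (Finset.subset_univ S)
              (fun i _ _ => sq_nonneg _)) (Nat.cast_nonneg _)
  have key : (v₁ ⬝ᵥ z) ^ 2 ≤ (S.card : ℝ) * ∑ i, (v₁ i) ^ 2 := by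
    have habs : (0 : ℝ) ≤ ∑ i ∈ S, |v₁ i| :=
      Finset.sum_nonneg fun i _ => abs_nonneg _
    nlinarith [hle, hCS, hdot]
  -- conclude
  have hn0 : (0 : ℝ) < (n : ℝ) := by exact_mod_cast hpos
  calc ξ * n ≤ ((v₁ ⬝ᵥ z) / (nrm v₁ * nrm z)) ^ 2 * n :=
        mul_le_mul_of_nonneg_right hcos2 hn0.le
    _ ≤ (S.card : ℝ) := by
        rw [div_pow, mul_pow, hNv2, hNz2, div_mul_eq_mul_div,
          div_le_iff₀ (by positivity)]
        nlinarith [key, hv2, hn0]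
end
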